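/- Fix (t,μ) ∈ (0,∞) × C. Suppose (a,v) and (a',v') in ℝ × H both satisfy: for a single function φ : (0,∞) × C → ℝ, φ(s,ν) = φ(t,μ) + a(s−t) + ⟨v, ν−μ⟩ + o( (|s−t|² + ‖ν−μ‖²)^{1/2} ) and also φ(s,ν) = φ(t,μ) + a'(s−t) + ⟨v', ν−μ⟩ + o( (|s−t|² + ‖ν−μ‖²)^{1/2} ) as (s,ν) → (t,μ) with (s,ν) ranging over (0,∞) × C. Then (a,v) = (a',v'). (Derivatives relative to the cone C are unique.) -/

import Mathlib

/-! The two expansions say that `(s, ν) ↦ φ s ν` has the Fréchet derivatives `(a, ⟪v, ·⟫)` and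
`(a', ⟪v', ·⟫)` within `(0, ∞) × C` at `(t, μ)`, so it suffices that this set is one of unique
differentiability, i.e. that its tangent cone at `(t, μ)` spans a dense subspace. As `t` is interior
to `(0, ∞)` and `C` is a convex cone, that tangent cone contains `ℝ × C`. The span of `C` is dense:
`C` contains the indicators of the intervals `[c, 1)`, and a function orthogonal to all of them has
vanishing integral over every `[c, 1)`, hence vanishes almost everywhere. -/

open MeasureTheory

/-- Lebesgue measure restricted to `[0,1)`. -/
noncomputable def mu0 : Measure ℝ := volume.restrict (Set.Ico (0 : ℝ) 1)

/-- The Hilbert space `H = L²([0,1))`. -/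
noncomputable abbrev Hsp : Type := Lp ℝ 2 mu0

/-- The cone `C ⊂ H` of (classes of) functions with a nondecreasing nonnegative
representative on `[0,1)`. -/
def coneC : Set Hsp :=
  {f | ∃ g : ℝ → ℝ, MonotoneOn g (Set.Ico 0 1) ∧ (∀ x ∈ Set.Ico (0 : ℝ) 1, 0 ≤ g x) ∧
    (f : ℝ → ℝ) =ᵐ[mu0] g}

open Set Topology Asymptotics ContinuousLinearMap

theorem ae_eq_zero_of_forall_setIntegral_Ici_eq_zero {α : Type*} [TopologicalSpace α]
    [MeasurableSpace α] [SecondCountableTopology α] [LinearOrder α] [OrderTopology α]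
    [BorelSpace α] {μ : Measure α} [IsFiniteMeasure μ] {f : α → ℝ} (hf : Integrable f μ)
    (h : ∀ c, ∫ x in Ici c, f x ∂μ = 0) : f =ᵐ[μ] 0 := by
  have := isFiniteMeasure_withDensity_ofReal hf.2
  have := isFiniteMeasure_withDensity_ofReal hf.neg.2
  have hpos_eq_neg : μ.withDensity (fun x => ENNReal.ofReal (f x))
      = μ.withDensity (fun x => ENNReal.ofReal (-f x)) := by
    refine Measure.ext_of_Ici _ _ fun c => ?_
    have hc := h c
    rw [integral_eq_lintegral_pos_part_sub_lintegral_neg_part hf.integrableOn, sub_eq_zero,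
      ← withDensity_apply _ measurableSet_Ici, ← withDensity_apply _ measurableSet_Ici] at hc
    exact (ENNReal.toReal_eq_toReal_iff' (measure_ne_top _ _) (measure_ne_top _ _)).mp hc
  have hpos_finite : ∫⁻ x, ENNReal.ofReal (f x) ∂μ ≠ ⊤ := by
    rw [← setLIntegral_univ, ← withDensity_apply _ MeasurableSet.univ]
    exact measure_ne_top _ _
  have hae := (withDensity_eq_iff hf.1.aemeasurable.ennreal_ofReal
    hf.1.aemeasurable.neg.ennreal_ofReal hpos_finite).mp hpos_eq_neg
  filter_upwards [hae] with x hx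
  simp only [Pi.neg_apply, Pi.zero_apply] at hx ⊢
  rcases le_total (f x) 0 with hneg | hpos
  · rw [ENNReal.ofReal_of_nonpos hneg, eq_comm, ENNReal.ofReal_eq_zero] at hx
    linarith
  · rw [ENNReal.ofReal_of_nonpos (neg_nonpos.2 hpos), ENNReal.ofReal_eq_zero] at hx
    linarith

theorem uniqueDiffWithinAt_of_segment_subset {E : Type*} [NormedAddCommGroup E]
    [NormedSpace ℝ E] {s D : Set E} {x : E} (hx : x ∈ s)
    (hD : Dense (Submodule.span ℝ D : Set E)) (hsegment : ∀ w ∈ D, segment ℝ x (x + w) ⊆ s) :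
    UniqueDiffWithinAt ℝ s x := by
  refine ⟨hD.mono (Submodule.span_mono fun w hw => ?_), subset_closure hx⟩
  simpa using mem_tangentConeAt_of_segment_subset (hsegment w hw)

theorem HasFDerivWithinAt.of_isLittleO_sqrt {𝕜 E F G : Type*} [NontriviallyNormedField 𝕜]
    [NormedAddCommGroup E] [NormedSpace 𝕜 E] [NormedAddCommGroup F] [NormedSpace 𝕜 F]
    [NormedAddCommGroup G] [NormedSpace 𝕜 G] {f : E × F → G} {f' : E × F →L[𝕜] G}
    {s : Set (E × F)} {x : E × F}
    (h : (fun p => f p - f x - f' (p - x))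
      =o[𝓝[s] x] fun p => √(‖p.1 - x.1‖ ^ 2 + ‖p.2 - x.2‖ ^ 2)) :
    HasFDerivWithinAt f f' s x := by
  -- the norm on `E × F` is the sup norm, which is at least half the Euclidean one
  refine .of_isLittleO (h.trans_isBigO (isBigO_of_le' (c := 2) _ fun p => ?_))
  have h1 := norm_fst_le (p - x)
  have h2 := norm_snd_le (p - x)
  rw [Real.norm_of_nonneg (Real.sqrt_nonneg _), Real.sqrt_le_iff]
  simp only [Prod.fst_sub, Prod.snd_sub] at h1 h2
  exact ⟨by positivity, by nlinarith [norm_nonneg (p.1 - x.1), norm_nonneg (p.2 - x.2)]⟩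

instance isFiniteMeasure_mu0 : IsFiniteMeasure mu0 := by
  unfold mu0; infer_instance

theorem smul_add_smul_mem_coneC {f g : Hsp} (hf : f ∈ coneC) (hg : g ∈ coneC) {a b : ℝ}
    (ha : 0 ≤ a) (hb : 0 ≤ b) : a • f + b • g ∈ coneC := by
  obtain ⟨f₀, hf_mono, hf_nonneg, hf_ae⟩ := hf
  obtain ⟨g₀, hg_mono, hg_nonneg, hg_ae⟩ := hg
  refine ⟨a • f₀ + b • g₀, fun x hx y hy hxy => ?_, fun x hx => ?_, ?_⟩
  · exact add_le_add (smul_le_smul_of_nonneg_left (hf_mono hx hy hxy) ha)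
      (smul_le_smul_of_nonneg_left (hg_mono hx hy hxy) hb)
  · exact add_nonneg (smul_nonneg ha (hf_nonneg x hx)) (smul_nonneg hb (hg_nonneg x hx))
  · filter_upwards [Lp.coeFn_add (a • f) (b • g), Lp.coeFn_smul a f, Lp.coeFn_smul b g, hf_ae,
      hg_ae] with x h_add h_smul_f h_smul_g hfx hgx
    simp only [h_add, Pi.add_apply, h_smul_f, h_smul_g, Pi.smul_apply, hfx, hgx]

theorem convex_coneC : Convex ℝ coneC :=
  fun _ hf _ hg _ _ ha hb _ => smul_add_smul_mem_coneC hf hg ha hb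

theorem add_mem_coneC {f g : Hsp} (hf : f ∈ coneC) (hg : g ∈ coneC) : f + g ∈ coneC := by
  simpa using smul_add_smul_mem_coneC hf hg zero_le_one zero_le_one

theorem indicatorConstLp_Ici_mem_coneC (c : ℝ) :
    indicatorConstLp 2 measurableSet_Ici (measure_ne_top mu0 (Ici c)) (1 : ℝ) ∈ coneC := by
  refine ⟨(Ici c).indicator fun _ => 1, fun x _ y _ hxy => ?_, fun x _ => indicator_nonneg
    (fun _ _ => zero_le_one) x, indicatorConstLp_coeFn⟩
  by_cases hx : x ∈ Ici c
  · rw [indicator_of_mem hx, indicator_of_mem (mem_Ici.2 (hx.trans hxy))]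
  · rw [indicator_of_notMem hx]
    exact indicator_nonneg (fun _ _ => zero_le_one) y

theorem eq_zero_of_forall_inner_coneC {u : Hsp} (h : ∀ w ∈ coneC, inner ℝ w u = 0) : u = 0 := by
  refine Lp.eq_zero_iff_ae_eq_zero.2 (ae_eq_zero_of_forall_setIntegral_Ici_eq_zero
    ((Lp.memLp u).integrable one_le_two) fun c => ?_)
  rw [← L2.inner_indicatorConstLp_one measurableSet_Ici (measure_ne_top mu0 _)]
  exact h _ (indicatorConstLp_Ici_mem_coneC c)

theorem dense_span_coneC : Dense (Submodule.span ℝ coneC : Set Hsp) := by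
  rw [Submodule.dense_iff_topologicalClosure_eq_top, Submodule.topologicalClosure_eq_top_iff,
    Submodule.eq_bot_iff]
  exact fun u hu => eq_zero_of_forall_inner_coneC fun w hw =>
    Submodule.inner_right_of_mem_orthogonal (Submodule.subset_span hw) hu

theorem uniqueDiffWithinAt_coneC {μ : Hsp} (hμ : μ ∈ coneC) : UniqueDiffWithinAt ℝ coneC μ :=
  uniqueDiffWithinAt_of_segment_subset hμ dense_span_coneC fun _ hw =>
    convex_coneC.segment_subset hμ (add_mem_coneC hμ hw)

section ProductDerivative

variable {E : Type*} [NormedAddCommGroup E] [InnerProductSpace ℝ E]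

theorem hasFDerivWithinAt_uncurry_of_isLittleO {φ : ℝ → E → ℝ} {s : Set (ℝ × E)} {t : ℝ}
    {μ : E} {a : ℝ} {v : E}
    (h : (fun p : ℝ × E => φ p.1 p.2 - φ t μ - a * (p.1 - t) - inner ℝ v (p.2 - μ))
      =o[𝓝[s] (t, μ)] fun p : ℝ × E => √((p.1 - t) ^ 2 + ‖p.2 - μ‖ ^ 2)) :
    HasFDerivWithinAt (Function.uncurry φ) (a • fst ℝ ℝ E + (innerSL ℝ v).comp (snd ℝ ℝ E))
      s (t, μ) := by
  refine .of_isLittleO_sqrt ((h.congr_left fun p => ?_).congr_right fun p => ?_)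
  · simp [sub_sub, add_assoc, Function.uncurry_def]
  · simp

theorem eq_of_smul_fst_add_innerSL_comp_snd_eq {a a' : ℝ} {v v' : E}
    (h : a • fst ℝ ℝ E + (innerSL ℝ v).comp (snd ℝ ℝ E)
      = a' • fst ℝ ℝ E + (innerSL ℝ v').comp (snd ℝ ℝ E)) :
    a = a' ∧ v = v' := by
  refine ⟨by simpa using congr($h (1, 0)), ext_inner_right ℝ fun w => ?_⟩
  simpa using congr($h (0, w))

end ProductDerivative

open Asymptotics in
theorem stmt7 (t : ℝ) (ht : 0 < t) (μ : Hsp) (hμ : μ ∈ coneC)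
    (φ : ℝ → Hsp → ℝ) (a a' : ℝ) (v v' : Hsp)
    (h : (fun p : ℝ × Hsp =>
        φ p.1 p.2 - φ t μ - a * (p.1 - t) - inner (𝕜 := ℝ) v (p.2 - μ))
      =o[nhdsWithin (t, μ) (Set.Ioi (0 : ℝ) ×ˢ coneC)]
        (fun p : ℝ × Hsp => Real.sqrt ((p.1 - t) ^ 2 + ‖p.2 - μ‖ ^ 2)))
    (h' : (fun p : ℝ × Hsp =>
        φ p.1 p.2 - φ t μ - a' * (p.1 - t) - inner (𝕜 := ℝ) v' (p.2 - μ))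
      =o[nhdsWithin (t, μ) (Set.Ioi (0 : ℝ) ×ˢ coneC)]
        (fun p : ℝ × Hsp => Real.sqrt ((p.1 - t) ^ 2 + ‖p.2 - μ‖ ^ 2))) :
    a = a' ∧ v = v' := by
  have hunique : UniqueDiffWithinAt ℝ (Ioi 0 ×ˢ coneC) (t, μ) :=
    (isOpen_Ioi.uniqueDiffWithinAt ht).prod (uniqueDiffWithinAt_coneC hμ)
  exact eq_of_smul_fst_add_innerSL_comp_snd_eq (hunique.eq
    (hasFDerivWithinAt_uncurry_of_isLittleO h) (hasFDerivWithinAt_uncurry_of_isLittleO h'))
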